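/- Let V be a vector superspace and g ⊆ gl(V) a Lie supersubalgebra, and let R ∈ R(g) be even and annihilated by the g-action on R(g). Then the subspace h₀ = span{ R(x,y) : x, y ∈ V } ⊆ g is a Lie supersubalgebra of g, and together with V it forms a symmetric decomposition: [h₀, h₀] ⊆ h₀, [h₀, V] ⊆ V, and [V, V] := −R(·,·) has image in h₀, satisfying all components of the super Jacobi identity for h₀ ⊕ V. -/

import Mathlib

/-- A vector superspace structure on `V`: a pair of complementary subspaces. -/
structure SuperSpace (k V : Type*) [Field k] [AddCommGroup V] [Module k V] where
  even : Submodule k V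
  odd : Submodule k V
  isCompl : IsCompl even odd

variable {k V : Type*} [Field k] [AddCommGroup V] [Module k V]

/-- The subspace of elements of parity `p`. -/
def SuperSpace.part (S : SuperSpace k V) (p : ZMod 2) : Submodule k V :=
  if p = 0 then S.even else S.odd

/-- The sign `(-1)^p`. -/
def sg (k : Type*) [Field k] (p : ZMod 2) : k := if p = 1 then -1 else 1

/-- `A` is a homogeneous endomorphism of parity `p`. -/
def SuperSpace.HomEnd (S : SuperSpace k V) (p : ZMod 2) (A : Module.End k V) : Prop :=
  ∀ q x, x ∈ S.part q → A x ∈ S.part (q + p)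

/-- Supercommutator of endomorphisms of parities `pa`, `pb`. -/
def sbr (pa pb : ZMod 2) (A B : Module.End k V) : Module.End k V :=
  A * B - sg k (pa * pb) • (B * A)

/-- Super skew-symmetry of a bilinear map with operator values. -/
def SuperSkew (S : SuperSpace k V) (R : V →ₗ[k] V →ₗ[k] Module.End k V) : Prop :=
  ∀ p q x y, x ∈ S.part p → y ∈ S.part q → R x y = - sg k (p * q) • R y x

/-- The first Bianchi super-identity. -/
def Bianchi (S : SuperSpace k V) (R : V →ₗ[k] V →ₗ[k] Module.End k V) : Prop :=
  ∀ p q r x y z, x ∈ S.part p → y ∈ S.part q → z ∈ S.part r →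
    R x y z + sg k (p * (q + r)) • R y z x + sg k (r * (p + q)) • R z x y = 0

/-- `R` is an algebraic curvature tensor of type `g`. -/
def CurvOf (S : SuperSpace k V) (g : Submodule k (Module.End k V))
    (R : V →ₗ[k] V →ₗ[k] Module.End k V) : Prop :=
  (∀ x y, R x y ∈ g) ∧ SuperSkew S R ∧ Bianchi S R

/-- `R` is homogeneous of parity `pR`: `R x y` has parity `pR + |x| + |y|`. -/
def HomCurv (S : SuperSpace k V) (pR : ZMod 2)
    (R : V →ₗ[k] V →ₗ[k] Module.End k V) : Prop :=
  ∀ p q x y, x ∈ S.part p → y ∈ S.part q → S.HomEnd (pR + p + q) (R x y)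

/-- The bracket on `h₀ ⊕ V` determined by an algebraic curvature tensor `R`, for
elements of parities `p`, `q`: `[(A,x),(B,y)] = ([A,B] − R(x,y), A y − (−1)^{pq} B x)`. -/
def hbr {k V : Type*} [Field k] [AddCommGroup V] [Module k V]
    (R : V →ₗ[k] V →ₗ[k] Module.End k V) (p q : ZMod 2)
    (a b : Module.End k V × V) : Module.End k V × V :=
  (sbr p q a.1 b.1 - R a.2 b.2, a.1 b.2 - sg k (p * q) • b.1 a.2)

/-! `h₀ = span{R(x,y)}` is the sum of the spans `T₀`, `T₁` of the values `R(x,y)` on homogeneous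
`x`, `y` of total parity `0`, resp. `1`. The sign in the supercommutator `[A, ·]` depends on the
declared parity of its argument, so the annihilation condition only applies to generators of the
right parity; but a homogeneous element of `h₀` of parity `p` already lies in `T_p`, since its
component in `T_{p+1}` is homogeneous of both parities, hence zero. On such generators the
annihilation condition gives `[A, R(x,y)] = R(Ax,y) ± R(x,Ay) ∈ h₀` for every homogeneous `A ∈ g`.
In the super Jacobi identity on `h₀ ⊕ V`, the `h₀`-component reduces, by the super Jacobi identity
of the supercommutator, to curvature terms that cancel in pairs by the annihilation condition and
super skew-symmetry; the `V`-component is the first Bianchi identity. -/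

open Submodule

lemma ZMod.two_eq_or_eq_add_one (p q : ZMod 2) : q = p ∨ q = p + 1 := by
  revert p q; decide

lemma ZMod.two_cases (p : ZMod 2) : p = 0 ∨ p = 1 := by
  revert p; decide

@[simp] lemma sg_zero : sg k 0 = 1 := rfl

@[simp] lemma sg_one : sg k 1 = -1 := rfl

lemma sbr_eq_apply (pa pb : ZMod 2) (A B : Module.End k V) :
    sbr pa pb A B = (LinearMap.mulLeft k A - sg k (pa * pb) • LinearMap.mulRight k A) B :=
  rfl

lemma sbr_sub_right (pa pb : ZMod 2) (A B B' : Module.End k V) :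
    sbr pa pb A (B - B') = sbr pa pb A B - sbr pa pb A B' := by
  simp only [sbr_eq_apply, map_sub]

lemma sbr_jacobi (p q r : ZMod 2) (A B C : Module.End k V) :
    sg k (p * r) • sbr p (q + r) A (sbr q r B C) + sg k (q * p) • sbr q (r + p) B (sbr r p C A)
      + sg k (r * q) • sbr r (p + q) C (sbr p q A B) = 0 := by
  rcases ZMod.two_cases p with rfl | rfl <;> rcases ZMod.two_cases q with rfl | rfl <;>
    rcases ZMod.two_cases r with rfl | rfl <;>
    simp [sbr, CharTwo.add_self_eq_zero] <;> noncomm_ring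

namespace SuperSpace

variable (S : SuperSpace k V)

lemma disjoint_part_add_one (p : ZMod 2) : Disjoint (S.part p) (S.part (p + 1)) := by
  rcases ZMod.two_cases p with rfl | rfl
  · simpa [part] using S.isCompl.disjoint
  · simpa [part, CharTwo.add_self_eq_zero] using S.isCompl.disjoint.symm

lemma exists_part_zero_add_part_one (x : V) : ∃ x₀ ∈ S.part 0, ∃ x₁ ∈ S.part 1, x₀ + x₁ = x :=
  mem_sup.1 (by simp [part, S.isCompl.sup_eq_top])

lemma apply_apply_mem_of_homogeneous {M : Type*} [AddCommGroup M] [Module k M]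
    (B : V →ₗ[k] V →ₗ[k] M) (N : Submodule k M)
    (h : ∀ p q x y, x ∈ S.part p → y ∈ S.part q → B x y ∈ N) (x y : V) : B x y ∈ N := by
  obtain ⟨x₀, hx₀, x₁, hx₁, rfl⟩ := S.exists_part_zero_add_part_one x
  obtain ⟨y₀, hy₀, y₁, hy₁, rfl⟩ := S.exists_part_zero_add_part_one y
  rw [map_add, map_add, LinearMap.add_apply, LinearMap.add_apply]
  exact add_mem (add_mem (h _ _ _ _ hx₀ hy₀) (h _ _ _ _ hx₁ hy₀))
    (add_mem (h _ _ _ _ hx₀ hy₁) (h _ _ _ _ hx₁ hy₁))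

def homEnds (p : ZMod 2) : Submodule k (Module.End k V) where
  carrier := {A | S.HomEnd p A}
  add_mem' hA hB q x hx := add_mem (hA q x hx) (hB q x hx)
  zero_mem' _ _ _ := zero_mem _
  smul_mem' c _ hA q x hx := smul_mem _ c (hA q x hx)

lemma eq_zero_of_homEnd_of_homEnd_add_one {p : ZMod 2} {A : Module.End k V}
    (h : S.HomEnd p A) (h' : S.HomEnd (p + 1) A) : A = 0 := by
  have hpart : ∀ q y, y ∈ S.part q → A y = 0 := fun q y hy =>
    disjoint_def.1 (S.disjoint_part_add_one (q + p)) _ (h q y hy)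
      (add_assoc q p 1 ▸ h' q y hy)
  ext x
  obtain ⟨x₀, hx₀, x₁, hx₁, rfl⟩ := S.exists_part_zero_add_part_one x
  simp [hpart 0 x₀ hx₀, hpart 1 x₁ hx₁]

end SuperSpace

def curvatureSpan (R : V →ₗ[k] V →ₗ[k] Module.End k V) : Submodule k (Module.End k V) :=
  span k {A | ∃ x y, A = R x y}

def curvatureSpanPart (S : SuperSpace k V) (R : V →ₗ[k] V →ₗ[k] Module.End k V)
    (p : ZMod 2) : Submodule k (Module.End k V) :=
  span k {A | ∃ i j, ∃ x ∈ S.part i, ∃ y ∈ S.part j, i + j = p ∧ A = R x y}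

def AnnihilatedBy (S : SuperSpace k V) (g : Submodule k (Module.End k V))
    (R : V →ₗ[k] V →ₗ[k] Module.End k V) : Prop :=
  ∀ (pA : ZMod 2) (A : Module.End k V), A ∈ g → S.HomEnd pA A →
    ∀ (p q : ZMod 2) (x y : V), x ∈ S.part p → y ∈ S.part q →
      sbr pA (p + q) A (R x y) = R (A x) y + sg k (pA * p) • R x (A y)

section CurvatureSpan

variable (S : SuperSpace k V) (R : V →ₗ[k] V →ₗ[k] Module.End k V)

lemma apply_mem_curvatureSpan (x y : V) : R x y ∈ curvatureSpan R :=
  subset_span ⟨x, y, rfl⟩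

lemma curvatureSpan_le {g : Submodule k (Module.End k V)} (hRg : ∀ x y, R x y ∈ g) :
    curvatureSpan R ≤ g :=
  span_le.2 <| by rintro _ ⟨x, y, rfl⟩; exact hRg x y

lemma curvatureSpanPart_le_homEnds (heven : HomCurv S 0 R) (p : ZMod 2) :
    curvatureSpanPart S R p ≤ S.homEnds p :=
  span_le.2 <| by
    rintro _ ⟨i, j, x, hx, y, hy, rfl, rfl⟩
    have := heven i j x y hx hy
    rwa [zero_add] at this

lemma curvatureSpan_le_sup (p : ZMod 2) :
    curvatureSpan R ≤ curvatureSpanPart S R p ⊔ curvatureSpanPart S R (p + 1) :=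
  span_le.2 <| by
    rintro _ ⟨x, y, rfl⟩
    refine S.apply_apply_mem_of_homogeneous R _ (fun i j x y hx hy => ?_) x y
    rcases ZMod.two_eq_or_eq_add_one p (i + j) with h | h
    · exact mem_sup_left (subset_span ⟨i, j, x, hx, y, hy, h, rfl⟩)
    · exact mem_sup_right (subset_span ⟨i, j, x, hx, y, hy, h, rfl⟩)

lemma mem_curvatureSpanPart_of_homEnd (heven : HomCurv S 0 R) {p : ZMod 2}
    {B : Module.End k V} (hB : B ∈ curvatureSpan R) (hBp : S.HomEnd p B) :
    B ∈ curvatureSpanPart S R p := by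
  obtain ⟨B₀, hB₀, B₁, hB₁, rfl⟩ := mem_sup.1 (curvatureSpan_le_sup S R p hB)
  have hB₁p : B₁ ∈ S.homEnds p := by
    simpa using sub_mem (show B₀ + B₁ ∈ S.homEnds p from hBp)
      (curvatureSpanPart_le_homEnds S R heven p hB₀)
  rwa [S.eq_zero_of_homEnd_of_homEnd_add_one hB₁p
    (curvatureSpanPart_le_homEnds S R heven (p + 1) hB₁), add_zero]

lemma sbr_mem_curvatureSpan_of_mem_part {g : Submodule k (Module.End k V)}
    (hann : AnnihilatedBy S g R) {pa pb : ZMod 2} {A B : Module.End k V}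
    (hAg : A ∈ g) (hA : S.HomEnd pa A) (hB : B ∈ curvatureSpanPart S R pb) :
    sbr pa pb A B ∈ curvatureSpan R := by
  suffices curvatureSpanPart S R pb ≤ (curvatureSpan R).comap
      (LinearMap.mulLeft k A - sg k (pa * pb) • LinearMap.mulRight k A) from this hB
  refine span_le.2 ?_
  rintro _ ⟨i, j, x, hx, y, hy, rfl, rfl⟩
  rw [SetLike.mem_coe, mem_comap, ← sbr_eq_apply, hann pa A hAg hA i j x y hx hy]
  exact add_mem (apply_mem_curvatureSpan R _ _) (smul_mem _ _ (apply_mem_curvatureSpan R _ _))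

lemma sbr_mem_curvatureSpan {g : Submodule k (Module.End k V)} (heven : HomCurv S 0 R)
    (hann : AnnihilatedBy S g R) {pa pb : ZMod 2} {A B : Module.End k V}
    (hAg : A ∈ g) (hA : S.HomEnd pa A) (hB : B ∈ curvatureSpan R) (hBp : S.HomEnd pb B) :
    sbr pa pb A B ∈ curvatureSpan R :=
  sbr_mem_curvatureSpan_of_mem_part S R hann hAg hA
    (mem_curvatureSpanPart_of_homEnd S R heven hB hBp)

end CurvatureSpan

def jacobiator (R : V →ₗ[k] V →ₗ[k] Module.End k V) (p q r : ZMod 2)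
    (a b c : Module.End k V × V) : Module.End k V × V :=
  sg k (p * r) • hbr R p (q + r) a (hbr R q r b c)
    + sg k (q * p) • hbr R q (r + p) b (hbr R r p c a)
    + sg k (r * q) • hbr R r (p + q) c (hbr R p q a b)

section Jacobi

variable {S : SuperSpace k V} {R : V →ₗ[k] V →ₗ[k] Module.End k V} {p q r : ZMod 2}
  {A B C : Module.End k V} {x y z : V}

lemma jacobiator_fst {g : Submodule k (Module.End k V)} (hskew : SuperSkew S R)
    (hann : AnnihilatedBy S g R)
    (hAg : A ∈ g) (hA : S.HomEnd p A) (hx : x ∈ S.part p)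
    (hBg : B ∈ g) (hB : S.HomEnd q B) (hy : y ∈ S.part q)
    (hCg : C ∈ g) (hC : S.HomEnd r C) (hz : z ∈ S.part r) :
    (jacobiator R p q r (A, x) (B, y) (C, z)).1 = 0 := by
  have jac := sbr_jacobi p q r A B C
  have hA' := hann p A hAg hA q r y z hy hz
  have hB' := hann q B hBg hB r p z x hz hx
  have hC' := hann r C hCg hC p q x y hx hy
  have sA := hskew (q + p) r (A y) z (hA q y hy) hz
  have sB := hskew (r + q) p (B z) x (hB r z hz) hx
  have sC := hskew (p + r) q (C x) y (hC p x hx) hy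
  simp only [jacobiator, hbr, Prod.fst_add, Prod.smul_fst, map_sub, map_smul, sbr_sub_right,
    hA', hB', hC', sA, sB, sC]
  rcases ZMod.two_cases p with rfl | rfl <;> rcases ZMod.two_cases q with rfl | rfl <;>
    rcases ZMod.two_cases r with rfl | rfl <;>
    simp only [sg_zero, sg_one, CharTwo.add_self_eq_zero, zero_add, add_zero, mul_zero,
      mul_one, neg_smul, one_smul, neg_neg] at jac ⊢ <;>
    linear_combination (norm := module) jac

lemma jacobiator_snd (hBi : Bianchi S R) (hx : x ∈ S.part p) (hy : y ∈ S.part q)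
    (hz : z ∈ S.part r) : (jacobiator R p q r (A, x) (B, y) (C, z)).2 = 0 := by
  have bian := hBi p q r x y z hx hy hz
  simp only [jacobiator, hbr, Prod.snd_add, Prod.smul_snd, map_sub, map_smul,
    LinearMap.sub_apply, LinearMap.smul_apply, sbr, Module.End.mul_apply]
  rcases ZMod.two_cases p with rfl | rfl <;> rcases ZMod.two_cases q with rfl | rfl <;>
    rcases ZMod.two_cases r with rfl | rfl <;>
    simp only [sg_zero, sg_one, CharTwo.add_self_eq_zero, zero_add, add_zero, mul_zero,
      mul_one, neg_smul, one_smul] at bian ⊢ <;>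
    first
    | linear_combination (norm := module) bian
    | linear_combination (norm := module) (-1 : k) • bian

end Jacobi

/-- if `R ∈ R(g)` is even and annihilated by the `g`-action, then
`h₀ = span{R(x,y)} ⊆ g` is a Lie supersubalgebra, and `h₀ ⊕ V` with the bracket
`[x,y] = −R(x,y)`, `[A,x] = A x`, `[A,B]` the supercommutator is a symmetric
decomposition: `[h₀,h₀] ⊆ h₀`, `[h₀,V] ⊆ V`, `[V,V] ⊆ h₀`, and the super Jacobi
identity holds for homogeneous elements of `h₀ ⊕ V`. -/
theorem symmetric_decomposition_of_invariant_curvature {k V : Type*} [Field k]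
    [AddCommGroup V] [Module k V]
    (S : SuperSpace k V) (g : Submodule k (Module.End k V))
    (R : V →ₗ[k] V →ₗ[k] Module.End k V)
    (hRg : ∀ x y, R x y ∈ g) (hskew : SuperSkew S R) (hB : Bianchi S R)
    (heven : HomCurv S 0 R)
    (hann : ∀ (pA : ZMod 2) (A : Module.End k V), A ∈ g → S.HomEnd pA A →
      ∀ (p q : ZMod 2) (x y : V), x ∈ S.part p → y ∈ S.part q →
        sbr pA (p + q) A (R x y) = R (A x) y + sg k (pA * p) • R x (A y)) :
    -- `h₀ = span{R(x,y)}` is contained in `g`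
    Submodule.span k {A : Module.End k V | ∃ x y, A = R x y} ≤ g ∧
    -- `[h₀,h₀] ⊆ h₀`: `h₀` is a Lie supersubalgebra
    (∀ (pa pb : ZMod 2) (A B : Module.End k V),
      A ∈ Submodule.span k {A : Module.End k V | ∃ x y, A = R x y} → S.HomEnd pa A →
      B ∈ Submodule.span k {A : Module.End k V | ∃ x y, A = R x y} → S.HomEnd pb B →
      sbr pa pb A B ∈ Submodule.span k {A : Module.End k V | ∃ x y, A = R x y}) ∧
    -- `[V,V] = −R(·,·)` has image in `h₀`
    (∀ x y : V, R x y ∈ Submodule.span k {A : Module.End k V | ∃ x y, A = R x y}) ∧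
    -- the bracket of elements of `h₀ ⊕ V` has first component in `h₀`
    (∀ (p q : ZMod 2) (a b : Module.End k V × V),
      a.1 ∈ Submodule.span k {A : Module.End k V | ∃ x y, A = R x y} →
      S.HomEnd p a.1 → a.2 ∈ S.part p →
      b.1 ∈ Submodule.span k {A : Module.End k V | ∃ x y, A = R x y} →
      S.HomEnd q b.1 → b.2 ∈ S.part q →
      (hbr R p q a b).1 ∈ Submodule.span k {A : Module.End k V | ∃ x y, A = R x y}) ∧
    -- super Jacobi identity on `h₀ ⊕ V`
    (∀ (p q r : ZMod 2) (a b c : Module.End k V × V),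
      a.1 ∈ Submodule.span k {A : Module.End k V | ∃ x y, A = R x y} →
      S.HomEnd p a.1 → a.2 ∈ S.part p →
      b.1 ∈ Submodule.span k {A : Module.End k V | ∃ x y, A = R x y} →
      S.HomEnd q b.1 → b.2 ∈ S.part q →
      c.1 ∈ Submodule.span k {A : Module.End k V | ∃ x y, A = R x y} →
      S.HomEnd r c.1 → c.2 ∈ S.part r →
      sg k (p * r) • hbr R p (q + r) a (hbr R q r b c)
        + sg k (q * p) • hbr R q (r + p) b (hbr R r p c a)
        + sg k (r * q) • hbr R r (p + q) c (hbr R p q a b) = 0) := by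
  have hle : curvatureSpan R ≤ g := curvatureSpan_le R hRg
  have hclosed : ∀ (pa pb : ZMod 2) (A B : Module.End k V), A ∈ curvatureSpan R →
      S.HomEnd pa A → B ∈ curvatureSpan R → S.HomEnd pb B → sbr pa pb A B ∈ curvatureSpan R :=
    fun _ _ _ _ hAh hA hBh hB' => sbr_mem_curvatureSpan S R heven hann (hle hAh) hA hBh hB'
  refine ⟨hle, hclosed, apply_mem_curvatureSpan R, ?_, ?_⟩
  · rintro p q ⟨A, x⟩ ⟨B, y⟩ hAh hA - hBh hB' -
    exact sub_mem (hclosed p q A B hAh hA hBh hB') (apply_mem_curvatureSpan R x y)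
  · rintro p q r ⟨A, x⟩ ⟨B, y⟩ ⟨C, z⟩ hAh hA hx hBh hB' hy hCh hC hz
    exact Prod.ext
      (jacobiator_fst hskew hann (hle hAh) hA hx (hle hBh) hB' hy (hle hCh) hC hz)
      (jacobiator_snd hB hx hy hz)
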